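/- arXiv:1912.13226 — 4 statements merged into one kernel-verified Lean document; each statement's English description precedes it below -/
import Mathlib

section
/- Let μ > 0 be a real number, let A_0 be a d×m real matrix, let c_0, c_1, ..., c_K ∈ ℝ^m, and define F(A) = ‖A − A_0‖_F² + μ·Σ_{k=0}^{K} ‖A·c_k‖₂² over d×m real matrices A. Then A* = A_0·(I + μ·Σ_{k=0}^{K} c_k·c_kᵀ)^{-1} is the UNIQUE minimizer of F: for every d×m real matrix A with A ≠ A*, F(A*) < F(A). -/
/-- Uniqueness of the minimizer of the transformation-matrix update objective
(Equations 13–14): `A* = A_0·(I + μ·Σ_k c_k·c_kᵀ)⁻¹` is the unique minimizer of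
`F(A) = ‖A − A_0‖_F² + μ·Σ_k ‖A·c_k‖₂²`. -/
theorem stmt_6 (d m K : ℕ) (μ : ℝ) (hμ : 0 < μ)
    (A₀ : Matrix (Fin d) (Fin m) ℝ) (c : Fin (K + 1) → Fin m → ℝ)
    (F : Matrix (Fin d) (Fin m) ℝ → ℝ)
    (hF : F = fun A => (∑ i, ∑ j, (A i j - A₀ i j) ^ 2) +
      μ * ∑ k, ∑ i, (A.mulVec (c k) i) ^ 2)
    (B : Matrix (Fin m) (Fin m) ℝ)
    (hB : B = 1 + μ • ∑ k, Matrix.vecMulVec (c k) (c k)) :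
    ∀ A : Matrix (Fin d) (Fin m) ℝ, A ≠ A₀ * B⁻¹ → F (A₀ * B⁻¹) < F A := by
  set C : Matrix (Fin m) (Fin m) ℝ := ∑ k, Matrix.vecMulVec (c k) (c k) with hCdef
  -- the quadratic form of C
  have hquad : ∀ x : Fin m → ℝ,
      dotProduct x (C.mulVec x) = ∑ k, (dotProduct (c k) x) ^ 2 := by
    intro x
    simp only [hCdef, Matrix.mulVec, dotProduct, Matrix.sum_apply,
      Matrix.vecMulVec_apply, Finset.sum_apply, pow_two]
    simp_rw [Finset.sum_mul, Finset.mul_sum]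
    refine Eq.trans (Finset.sum_congr rfl fun i _ => Finset.sum_comm) ?_
    refine Eq.trans Finset.sum_comm ?_
    exact Finset.sum_congr rfl fun k _ => Finset.sum_congr rfl fun i _ =>
      Finset.sum_congr rfl fun j _ => by ring
  -- B is invertible
  have hdet : IsUnit B.det := by
    rw [isUnit_iff_ne_zero]
    intro h
    obtain ⟨v, hv, hv0⟩ := Matrix.exists_mulVec_eq_zero_iff.mpr h
    have h1 : dotProduct v (B.mulVec v)
        = dotProduct v v + μ * ∑ k, (dotProduct (c k) v) ^ 2 := by
      rw [hB, Matrix.add_mulVec, Matrix.one_mulVec, dotProduct_add,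
        Matrix.smul_mulVec, dotProduct_smul, smul_eq_mul, hquad]
    rw [hv0, dotProduct_zero] at h1
    have h2 : 0 < dotProduct v v :=
      lt_of_le_of_ne (Finset.sum_nonneg fun i _ => mul_self_nonneg _)
        (fun h' => hv (dotProduct_self_eq_zero.mp h'.symm))
    have h3 : 0 ≤ μ * ∑ k, (dotProduct (c k) v) ^ 2 :=
      mul_nonneg hμ.le (Finset.sum_nonneg fun k _ => sq_nonneg _)
    linarith
  set A' : Matrix (Fin d) (Fin m) ℝ := A₀ * B⁻¹ with hA'def
  have hA'B : A' * B = A₀ := by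
    rw [hA'def, Matrix.mul_assoc, Matrix.nonsing_inv_mul B hdet, Matrix.mul_one]
  -- entrywise description of A' * B
  have hmulC : ∀ i j, (A' * C) i j = ∑ k, (A'.mulVec (c k) i) * c k j := by
    intro i j
    simp only [Matrix.mul_apply, hCdef, Matrix.sum_apply, Matrix.vecMulVec_apply,
      Matrix.mulVec, dotProduct]
    simp_rw [Finset.mul_sum, Finset.sum_mul]
    refine Eq.trans Finset.sum_comm ?_
    exact Finset.sum_congr rfl fun k _ => Finset.sum_congr rfl fun l _ => by ring
  have hzero : ∀ i j, (A' i j - A₀ i j) + μ * ∑ k, (A'.mulVec (c k) i) * c k j = 0 := by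
    intro i j
    have h1 : (A' * B) i j = A' i j + μ * ∑ k, (A'.mulVec (c k) i) * c k j := by
      rw [hB, Matrix.mul_add, Matrix.mul_one, Matrix.mul_smul, Matrix.add_apply,
        Matrix.smul_apply, smul_eq_mul, hmulC]
    rw [hA'B] at h1
    linarith
  -- the cross term vanishes
  have cross : ∀ Em : Matrix (Fin d) (Fin m) ℝ,
      (∑ i, ∑ j, Em i j * (A' i j - A₀ i j))
        + μ * ∑ k, ∑ i, (Em.mulVec (c k) i) * (A'.mulVec (c k) i) = 0 := by
    intro Em
    have h1 : ∑ k, ∑ i, (Em.mulVec (c k) i) * (A'.mulVec (c k) i)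
        = ∑ i, ∑ j, Em i j * ∑ k, (A'.mulVec (c k) i) * c k j := by
      simp only [Matrix.mulVec, dotProduct]
      simp_rw [Finset.mul_sum, Finset.sum_mul]
      refine Eq.trans Finset.sum_comm ?_
      refine Finset.sum_congr rfl fun i _ => ?_
      simp_rw [Finset.mul_sum]
      refine Eq.trans (Finset.sum_congr rfl fun k _ => Finset.sum_comm) ?_
      refine Eq.trans Finset.sum_comm ?_
      exact Finset.sum_congr rfl fun j _ => Finset.sum_congr rfl fun k _ =>
        Finset.sum_congr rfl fun l _ => by ring
    rw [h1, Finset.mul_sum, ← Finset.sum_add_distrib]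
    refine Finset.sum_eq_zero fun i _ => ?_
    rw [Finset.mul_sum, ← Finset.sum_add_distrib]
    refine Finset.sum_eq_zero fun j _ => ?_
    linear_combination Em i j * hzero i j
  -- key expansion of F
  have key : ∀ A : Matrix (Fin d) (Fin m) ℝ,
      F A = F A' + ((∑ i, ∑ j, (A i j - A' i j) ^ 2)
        + μ * ∑ k, ∑ i, ((A - A').mulVec (c k) i) ^ 2) := by
    intro A
    have E1 : ∑ i, ∑ j, (A i j - A₀ i j) ^ 2
        = (∑ i, ∑ j, (A' i j - A₀ i j) ^ 2) + (∑ i, ∑ j, (A i j - A' i j) ^ 2)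
          + 2 * ∑ i, ∑ j, (A - A') i j * (A' i j - A₀ i j) := by
      simp only [Finset.mul_sum, ← Finset.sum_add_distrib]
      exact Finset.sum_congr rfl fun i _ => Finset.sum_congr rfl fun j _ => by
        simp only [Matrix.sub_apply]; ring
    have E2 : ∑ k, ∑ i, (A.mulVec (c k) i) ^ 2
        = (∑ k, ∑ i, (A'.mulVec (c k) i) ^ 2) + (∑ k, ∑ i, ((A - A').mulVec (c k) i) ^ 2)
          + 2 * ∑ k, ∑ i, ((A - A').mulVec (c k) i) * (A'.mulVec (c k) i) := by
      simp only [Finset.mul_sum, ← Finset.sum_add_distrib]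
      refine Finset.sum_congr rfl fun k _ => Finset.sum_congr rfl fun i _ => ?_
      rw [Matrix.sub_mulVec]
      simp only [Pi.sub_apply]; ring
    have hc := cross (A - A')
    simp only [hF]
    linear_combination E1 + μ * E2 + 2 * hc
  intro A hA
  have hij : ∃ i j, A i j ≠ A' i j := by
    by_contra h
    push_neg at h
    exact hA (by ext i j; exact h i j)
  obtain ⟨i0, j0, hij⟩ := hij
  have hpos1 : 0 < ∑ i, ∑ j, (A i j - A' i j) ^ 2 := by
    refine Finset.sum_pos' (fun i _ => Finset.sum_nonneg fun j _ => sq_nonneg _)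
      ⟨i0, Finset.mem_univ _, Finset.sum_pos' (fun j _ => sq_nonneg _)
        ⟨j0, Finset.mem_univ _, ?_⟩⟩
    exact lt_of_le_of_ne (sq_nonneg _) (Ne.symm (pow_ne_zero 2 (sub_ne_zero.mpr hij)))
  have hpos2 : 0 ≤ μ * ∑ k, ∑ i, ((A - A').mulVec (c k) i) ^ 2 :=
    mul_nonneg hμ.le (Finset.sum_nonneg fun k _ => Finset.sum_nonneg fun i _ => sq_nonneg _)
  rw [key A]
  linarith
end

section
/- Consider the Hedge algorithm with N experts over T rounds: initial weights w_{i,1} = 1/N for i = 1,...,N; at each round t, losses ℓ_{i,t} ∈ [0,1] are revealed, the learner suffers loss L_t = (Σ_i w_{i,t}·ℓ_{i,t})/(Σ_i w_{i,t}), and weights are updated by w_{i,t+1} = w_{i,t}·β^{ℓ_{i,t}} for a fixed β ∈ (0,1). Then the learner's cumulative loss L = Σ_{t=1}^{T} L_t satisfies L ≤ (ln(1/β)·min_i Σ_{t=1}^{T} ℓ_{i,t} + ln N)/(1 − β). -/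
open Finset Real

/-- Hedge-algorithm bound (Theorem 2 of Freund and Schapire) invoked in the
proof of Theorem 1: with `N` experts, uniform initial weights `1/N`,
losses `ℓ_{i,t} ∈ [0,1]`, multiplicative update `w_{i,t+1} = w_{i,t}·β^{ℓ_{i,t}}`
and learner's loss `L_t = (Σ_i w_{i,t}·ℓ_{i,t})/(Σ_i w_{i,t})`, we have
`Σ_t L_t ≤ (ln(1/β)·min_i Σ_t ℓ_{i,t} + ln N)/(1 − β)`. -/
theorem stmt_8 (N T : ℕ) (hN : 0 < N) (β : ℝ) (hβ0 : 0 < β) (hβ1 : β < 1)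
    (ℓ : Fin N → Fin T → ℝ)
    (hℓ0 : ∀ i t, 0 ≤ ℓ i t) (hℓ1 : ∀ i t, ℓ i t ≤ 1)
    (w : Fin N → ℕ → ℝ)
    (hw0 : ∀ i, w i 0 = 1 / N)
    (hwstep : ∀ i (t : Fin T), w i (↑t + 1) = w i ↑t * β ^ (ℓ i t)) :
    ∑ t : Fin T, (∑ i, w i ↑t * ℓ i t) / (∑ i, w i ↑t)
      ≤ (Real.log (1 / β) * (⨅ i : Fin N, ∑ t : Fin T, ℓ i t) + Real.log N) / (1 - β) := by
  classical
  have hNpos : (0:ℝ) < N := by exact_mod_cast hN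
  have hNe : Nonempty (Fin N) := Fin.pos_iff_nonempty.mp hN
  set ℓ' : Fin N → ℕ → ℝ := fun i t => if h : t < T then ℓ i ⟨t, h⟩ else 0 with hℓ'def
  have hℓ'0 : ∀ i t, 0 ≤ ℓ' i t := by
    intro i t; simp only [hℓ'def]; split
    · exact hℓ0 _ _
    · exact le_refl 0
  have hℓ'1 : ∀ i t, ℓ' i t ≤ 1 := by
    intro i t; simp only [hℓ'def]; split
    · exact hℓ1 _ _
    · exact zero_le_one
  have hstep' : ∀ i (t : ℕ), t < T → w i (t + 1) = w i t * β ^ (ℓ' i t) := by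
    intro i t ht
    have := hwstep i ⟨t, ht⟩
    simpa [hℓ'def, dif_pos ht] using this
  -- positivity of weights
  have hwpos : ∀ t, t ≤ T → ∀ i, 0 < w i t := by
    intro t
    induction t with
    | zero => intro _ i; rw [hw0]; positivity
    | succ k ih =>
      intro hk i
      have hkT : k < T := hk
      rw [hstep' i k hkT]
      exact mul_pos (ih hkT.le i) (Real.rpow_pos_of_pos hβ0 _)
  -- closed form for weights
  have hwT : ∀ i, ∀ k, k ≤ T → w i k = (1 / N) * β ^ (∑ t ∈ Finset.range k, ℓ' i t) := by
    intro i k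
    induction k with
    | zero => intro _; simp [hw0]
    | succ k ih =>
      intro hk
      have hkT : k < T := hk
      rw [hstep' i k hkT, ih hkT.le, Finset.sum_range_succ,
        Real.rpow_add hβ0, mul_assoc]
  set Wt : ℕ → ℝ := fun t => ∑ i, w i t with hWt
  set Lt : ℕ → ℝ := fun t => (∑ i, w i t * ℓ' i t) / Wt t with hLt
  have hWpos : ∀ t, t ≤ T → 0 < Wt t := by
    intro t ht
    exact Finset.sum_pos (fun i _ => hwpos t ht i) Finset.univ_nonempty
  -- pointwise convexity bound
  have hpow : ∀ x : ℝ, 0 ≤ x → x ≤ 1 → β ^ x ≤ 1 - (1 - β) * x := by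
    intro x hx0 hx1
    have h := convexOn_exp.2 (Set.mem_univ (0:ℝ)) (Set.mem_univ (Real.log β))
      (by linarith : (0:ℝ) ≤ 1 - x) hx0 (by ring)
    simp only [smul_eq_mul, mul_zero, zero_add, Real.exp_zero, Real.exp_log hβ0] at h
    rw [Real.rpow_def_of_pos hβ0]
    calc Real.exp (Real.log β * x) = Real.exp (x * Real.log β) := by ring_nf
      _ ≤ (1 - x) * 1 + x * β := h
      _ = 1 - (1 - β) * x := by ring
  -- one-step bound on total weight
  have hWstep : ∀ t, t < T → Wt (t + 1) ≤ Wt t * Real.exp (-(1 - β) * Lt t) := by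
    intro t ht
    have hWtpos := hWpos t ht.le
    have h1 : Wt (t + 1) = ∑ i, w i t * β ^ (ℓ' i t) :=
      Finset.sum_congr rfl fun i _ => hstep' i t ht
    have h2 : Wt (t + 1) ≤ ∑ i, w i t * (1 - (1 - β) * ℓ' i t) := by
      rw [h1]
      exact Finset.sum_le_sum fun i _ =>
        mul_le_mul_of_nonneg_left (hpow _ (hℓ'0 i t) (hℓ'1 i t)) (hwpos t ht.le i).le
    have h4 : (∑ i, w i t * ℓ' i t) = Lt t * Wt t := by
      simp only [hLt]
      field_simp
    have h5 : Wt (t + 1) ≤ Wt t * (1 - (1 - β) * Lt t) := by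
      calc Wt (t + 1) ≤ ∑ i, w i t * (1 - (1 - β) * ℓ' i t) := h2
        _ = Wt t - (1 - β) * (∑ i, w i t * ℓ' i t) := by
            simp only [hWt, Finset.mul_sum, ← Finset.sum_sub_distrib]
            exact Finset.sum_congr rfl fun i _ => by ring
        _ = Wt t - (1 - β) * (Lt t * Wt t) := by rw [h4]
        _ = Wt t * (1 - (1 - β) * Lt t) := by ring
    refine h5.trans (mul_le_mul_of_nonneg_left ?_ hWtpos.le)
    have := Real.add_one_le_exp (-(1 - β) * Lt t)
    linarith
  -- cumulative bound on total weight
  have hWcum : ∀ k, k ≤ T → Wt k ≤ Real.exp (-(1 - β) * ∑ t ∈ Finset.range k, Lt t) := by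
    intro k
    induction k with
    | zero =>
      intro _
      have : Wt 0 = 1 := by
        simp [hWt, hw0, Finset.sum_const, Finset.card_univ]
        field_simp
      simp [this]
    | succ k ih =>
      intro hk
      have hkT : k < T := hk
      calc Wt (k + 1) ≤ Wt k * Real.exp (-(1 - β) * Lt k) := hWstep k hkT
        _ ≤ Real.exp (-(1 - β) * ∑ t ∈ Finset.range k, Lt t) * Real.exp (-(1 - β) * Lt k) :=
            mul_le_mul_of_nonneg_right (ih hkT.le) (Real.exp_pos _).le
        _ = Real.exp (-(1 - β) * ∑ t ∈ Finset.range (k + 1), Lt t) := by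
            rw [← Real.exp_add, Finset.sum_range_succ]
            congr 1
            ring
  -- identify the goal's sums with the ℕ-indexed versions
  set S : Fin N → ℝ := fun i => ∑ t : Fin T, ℓ i t with hS
  have hSeq : ∀ i, (∑ t ∈ Finset.range T, ℓ' i t) = S i := by
    intro i
    rw [hS, ← Fin.sum_univ_eq_sum_range]
    exact Finset.sum_congr rfl fun t _ => by simp [hℓ'def, t.is_lt]
  have hLeq : (∑ t : Fin T, (∑ i, w i ↑t * ℓ i t) / (∑ i, w i ↑t))
      = ∑ t ∈ Finset.range T, Lt t := by
    rw [← Fin.sum_univ_eq_sum_range]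
    refine Finset.sum_congr rfl fun t _ => ?_
    simp only [hLt, hWt]
    congr 1
    exact Finset.sum_congr rfl fun i _ => by simp [hℓ'def, t.is_lt]
  set C : ℝ := ∑ t ∈ Finset.range T, Lt t with hC
  -- key inequality for each expert
  have hkey : ∀ i, C ≤ (Real.log (1 / β) * S i + Real.log N) / (1 - β) := by
    intro i
    have hA : (1 / (N:ℝ)) * β ^ (S i) ≤ Wt T := by
      rw [← hSeq i, ← hwT i T le_rfl]
      exact Finset.single_le_sum (fun j _ => (hwpos T le_rfl j).le) (Finset.mem_univ i)
    have hAB : (1 / (N:ℝ)) * β ^ (S i) ≤ Real.exp (-(1 - β) * C) :=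
      hA.trans (hWcum T le_rfl)
    have hApos : 0 < (1 / (N:ℝ)) * β ^ (S i) :=
      mul_pos (by positivity) (Real.rpow_pos_of_pos hβ0 _)
    have hlog := Real.log_le_log hApos hAB
    rw [Real.log_exp, Real.log_mul (by positivity) (Real.rpow_pos_of_pos hβ0 _).ne',
      Real.log_rpow hβ0, one_div, Real.log_inv] at hlog
    have hβ' : Real.log (1 / β) = -Real.log β := by rw [one_div, Real.log_inv]
    rw [hβ', le_div_iff₀ (by linarith : (0:ℝ) < 1 - β)]
    nlinarith [hlog]
  -- take the infimum
  obtain ⟨i0, hi0⟩ := Finite.exists_min S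
  have hinf : (⨅ i : Fin N, S i) = S i0 :=
    le_antisymm (ciInf_le (Finite.bddBelow_range S) i0) (le_ciInf hi0)
  rw [hLeq, hinf]
  exact hkey i0
end

section
/- Let w_r, w_s, x ∈ ℝ^d with x ≠ 0, and suppose ℓ = 1 − w_r·x + w_s·x > 0. Consider the constrained problem: minimize ½·‖u − w_r‖₂² + ½·‖v − w_s‖₂² over u, v ∈ ℝ^d subject to u·x − v·x ≥ 1. Then the unique minimizer is u* = w_r + τ·x and v* = w_s − τ·x with τ = ℓ/(2‖x‖₂²), and the constraint holds with equality at (u*, v*). -/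
open scoped RealInnerProductSpace

/-- Closed-form multiclass Passive-Aggressive update (Section 3.2): with
`ℓ = 1 − w_r·x + w_s·x > 0` and `τ = ℓ/(2‖x‖²)`, the pair
`(u*, v*) = (w_r + τ·x, w_s − τ·x)` satisfies the margin constraint with
equality and is the unique minimizer of `½‖u − w_r‖² + ½‖v − w_s‖²` subject to
`u·x − v·x ≥ 1`. -/
theorem stmt_11 (d : ℕ) (wr ws x : EuclideanSpace ℝ (Fin d)) (hx : x ≠ 0)
    (ℓ : ℝ) (hℓdef : ℓ = 1 - ⟪wr, x⟫ + ⟪ws, x⟫) (hℓ : 0 < ℓ)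
    (τ : ℝ) (hτ : τ = ℓ / (2 * ‖x‖ ^ 2)) :
    (⟪wr + τ • x, x⟫ - ⟪ws - τ • x, x⟫ = 1) ∧
      ∀ u v : EuclideanSpace ℝ (Fin d), ⟪u, x⟫ - ⟪v, x⟫ ≥ 1 →
        ((1 / 2) * ‖(wr + τ • x) - wr‖ ^ 2 + (1 / 2) * ‖(ws - τ • x) - ws‖ ^ 2
            ≤ (1 / 2) * ‖u - wr‖ ^ 2 + (1 / 2) * ‖v - ws‖ ^ 2) ∧
          ((u, v) ≠ (wr + τ • x, ws - τ • x) →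
            (1 / 2) * ‖(wr + τ • x) - wr‖ ^ 2 + (1 / 2) * ‖(ws - τ • x) - ws‖ ^ 2
              < (1 / 2) * ‖u - wr‖ ^ 2 + (1 / 2) * ‖v - ws‖ ^ 2) := by
  have hx2 : (0:ℝ) < ‖x‖ ^ 2 := by
    have := norm_pos_iff.mpr hx
    positivity
  have hτℓ : 2 * τ * ‖x‖ ^ 2 = ℓ := by
    rw [hτ]; field_simp
  have hτpos : 0 < τ := by rw [hτ]; positivity
  have hLval : ‖(wr + τ • x) - wr‖ ^ 2 = τ ^ 2 * ‖x‖ ^ 2 := by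
    have : (wr + τ • x) - wr = τ • x := by abel
    rw [this, norm_smul]
    simp [mul_pow, sq_abs]
  have hRval : ‖(ws - τ • x) - ws‖ ^ 2 = τ ^ 2 * ‖x‖ ^ 2 := by
    have : (ws - τ • x) - ws = -(τ • x) := by abel
    rw [this, norm_neg, norm_smul]
    simp [mul_pow, sq_abs]
  have hxx : ⟪x, x⟫ = ‖x‖ ^ 2 := real_inner_self_eq_norm_sq x
  constructor
  · rw [inner_add_left, inner_sub_left, real_inner_smul_left, hxx]
    nlinarith [hτℓ, hℓdef]
  · intro u v h
    have e1 : ‖(u - wr) - τ • x‖ ^ 2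
        = ‖u - wr‖ ^ 2 - 2 * (τ * ⟪u - wr, x⟫) + τ ^ 2 * ‖x‖ ^ 2 := by
      rw [norm_sub_sq_real, real_inner_smul_right, norm_smul]
      simp [mul_pow, sq_abs]
    have e2 : ‖(v - ws) + τ • x‖ ^ 2
        = ‖v - ws‖ ^ 2 + 2 * (τ * ⟪v - ws, x⟫) + τ ^ 2 * ‖x‖ ^ 2 := by
      rw [norm_add_sq_real, real_inner_smul_right, norm_smul]
      simp [mul_pow, sq_abs]
    have hcon : ⟪u - wr, x⟫ - ⟪v - ws, x⟫ ≥ 2 * τ * ‖x‖ ^ 2 := by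
      rw [inner_sub_left, inner_sub_left, hτℓ]
      linarith [h, hℓdef.symm.le, hℓdef.le]
    have h1 : (0:ℝ) ≤ ‖(u - wr) - τ • x‖ ^ 2 := by positivity
    have h2 : (0:ℝ) ≤ ‖(v - ws) + τ • x‖ ^ 2 := by positivity
    have hmul : τ * ⟪u - wr, x⟫ - τ * ⟪v - ws, x⟫ ≥ 2 * τ ^ 2 * ‖x‖ ^ 2 := by
      nlinarith [mul_le_mul_of_nonneg_left hcon hτpos.le]
    constructor
    · rw [hLval, hRval]
      linarith [h1, h2, e1, e2, hmul]
    · intro hne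
      rw [hLval, hRval]
      have key : (0:ℝ) < ‖(u - wr) - τ • x‖ ^ 2 + ‖(v - ws) + τ • x‖ ^ 2 := by
        by_cases hu : u = wr + τ • x
        · have hv : v ≠ ws - τ • x := by
            intro hv
            exact hne (by rw [hu, hv])
          have : (v - ws) + τ • x ≠ 0 := by
            intro h0
            apply hv
            have : v - (ws - τ • x) = (v - ws) + τ • x := by abel
            exact sub_eq_zero.mp (by rw [this, h0])
          have hB : 0 < ‖(v - ws) + τ • x‖ ^ 2 := pow_pos (norm_pos_iff.mpr this) 2
          linarith [h1]
        · have : (u - wr) - τ • x ≠ 0 := by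
            intro h0
            apply hu
            have : u - (wr + τ • x) = (u - wr) - τ • x := by abel
            exact sub_eq_zero.mp (by rw [this, h0])
          have hA : 0 < ‖(u - wr) - τ • x‖ ^ 2 := pow_pos (norm_pos_iff.mpr this) 2
          linarith [h2]
      linarith [key, e1, e2, hmul]
end

section
/- Let n ≥ 1 be an integer and M_min > 0. Define g(β) = (M_min·ln(1/β) + ln(2n))/(1 − β) for β ∈ (0,1). Then for β* = √M_min/(√M_min + √(ln(2n))) (assuming n ≥ 1 so ln(2n) > 0), one has g(β*) ≤ M_min + (3/2)·√(ln(2n)·M_min) + ln(2n). -/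
/-! With `ln(1/β) ≤ (1 - β²)/(2β)` (that is, `t ≤ sinh t` at `t = ln(1/β)`) the bound becomes
`g(β) ≤ M(1 + β)/(2β) + L/(1 - β)` with `L = ln(2n)`. Writing `M = a²`, `L = b²`, the choice
`β* = a/(a + b)` turns the right-hand side into exactly `a² + (3/2)·a·b + b²`. -/

open Real

lemma Real.log_one_div_le {β : ℝ} (hβ₀ : 0 < β) (hβ₁ : β ≤ 1) :
    log (1 / β) ≤ (1 - β ^ 2) / (2 * β) := by
  have hx : 0 < 1 / β := one_div_pos.mpr hβ₀
  have hlog : 0 ≤ log (1 / β) := log_nonneg ((one_le_div hβ₀).mpr hβ₁)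
  calc log (1 / β) ≤ sinh (log (1 / β)) := self_le_sinh_iff.mpr hlog
    _ = (1 - β ^ 2) / (2 * β) := by
      rw [sinh_log hx]
      field_simp

lemma hedge_bound_le {M L β : ℝ} (hM : 0 ≤ M) (hβ₀ : 0 < β) (hβ₁ : β < 1) :
    (M * log (1 / β) + L) / (1 - β) ≤ M * (1 + β) / (2 * β) + L / (1 - β) := by
  have h1β : 0 < 1 - β := sub_pos.mpr hβ₁
  calc (M * log (1 / β) + L) / (1 - β)
      ≤ (M * ((1 - β ^ 2) / (2 * β)) + L) / (1 - β) := by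
        gcongr
        exact log_one_div_le hβ₀ hβ₁.le
    _ = M * (1 + β) / (2 * β) + L / (1 - β) := by
        field_simp
        ring

lemma hedge_bound_at_optimal {a b : ℝ} (ha : 0 < a) (hb : 0 < b) :
    a ^ 2 * (1 + a / (a + b)) / (2 * (a / (a + b))) + b ^ 2 / (1 - a / (a + b))
      = a ^ 2 + 3 / 2 * (a * b) + b ^ 2 := by
  have hab : 1 - a / (a + b) = b / (a + b) := by field_simp; ring
  rw [hab]
  field_simp
  ring

/-- Complete quantitative content of the proof of Theorem 1: for `n ≥ 1`,
`M_min > 0`, `g(β) = (M_min·ln(1/β) + ln(2n))/(1 − β)` and the paper's choice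
`β* = √M_min/(√M_min + √(ln(2n)))`, one has
`g(β*) ≤ M_min + (3/2)·√(ln(2n)·M_min) + ln(2n)`. -/
theorem stmt_13 (n : ℕ) (hn : 1 ≤ n) (Mmin : ℝ) (hMmin : 0 < Mmin)
    (g : ℝ → ℝ)
    (hg : g = fun β => (Mmin * Real.log (1 / β) + Real.log (2 * n)) / (1 - β))
    (βstar : ℝ)
    (hβstar : βstar = Real.sqrt Mmin / (Real.sqrt Mmin + Real.sqrt (Real.log (2 * n)))) :
    g βstar ≤ Mmin + (3 / 2) * Real.sqrt (Real.log (2 * n) * Mmin) + Real.log (2 * n) := by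
  have hL : 0 < log (2 * n) := log_pos (by norm_cast; omega)
  set L := log (2 * n)
  have ha : 0 < √Mmin := sqrt_pos.mpr hMmin
  have hb : 0 < √L := sqrt_pos.mpr hL
  have hβ₀ : 0 < βstar := hβstar ▸ by positivity
  have hβ₁ : βstar < 1 := hβstar ▸ (div_lt_one (by positivity)).mpr (by linarith)
  calc g βstar ≤ Mmin * (1 + βstar) / (2 * βstar) + L / (1 - βstar) :=
        hg ▸ hedge_bound_le hMmin.le hβ₀ hβ₁
    _ = √Mmin ^ 2 + 3 / 2 * (√Mmin * √L) + √L ^ 2 := by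
        rw [← hedge_bound_at_optimal ha hb, sq_sqrt hMmin.le, sq_sqrt hL.le, hβstar]
    _ = Mmin + 3 / 2 * √(L * Mmin) + L := by
        rw [sq_sqrt hMmin.le, sq_sqrt hL.le, sqrt_mul hL.le, mul_comm √L]
end
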